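/- arXiv:1608.08428 — 3 statements merged into one kernel-verified Lean document; each statement's English description precedes it below -/
import Mathlib

section
/- For z > 0 real and q = a + v a real quaternion with nonzero vector part, define z^q := z^a (cos(|v| log z) + (v/|v|) sin(|v| log z)). Then the derivative of z ↦ z^q with respect to z equals q z^{q-1}. -/
open scoped Quaternion

/-- The quaternionic power `z^q` for `z > 0` real and `q` a real quaternion:
`z^q = z^{Sc q} (cos(|Ve q| log z) + (Ve q/|Ve q|) sin(|Ve q| log z))`. -/
noncomputable def qpow (z : ℝ) (q : ℍ[ℝ]) : ℍ[ℝ] :=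
  (z ^ q.re : ℝ) •
    (((Real.cos (‖q.im‖ * Real.log z) : ℝ) : ℍ[ℝ]) +
      (Real.sin (‖q.im‖ * Real.log z) / ‖q.im‖) • q.im)

/-!
For `z > 0` the quaternionic power is `z^q = exp (log z • q)`, by the closed form of the
quaternion exponential. Since `t ↦ exp (t • q)` has derivative `q * exp (t • q)`, the chain rule
gives the derivative `z⁻¹ • q * z^q`, and `z^{q-1} = z⁻¹ • z^q` because `q - 1` has the same
vector part as `q`.
-/

open NormedSpace

theorem Real.cos_abs_mul (t r : ℝ) : Real.cos (|t| * r) = Real.cos (t * r) := by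
  rcases abs_cases t with ⟨h, _⟩ | ⟨h, _⟩ <;> simp [h]

theorem Real.sin_abs_mul_div_abs_mul_mul (t r : ℝ) :
    Real.sin (|t| * r) / (|t| * r) * t = Real.sin (t * r) / r := by
  rcases eq_or_ne t 0 with rfl | ht
  · simp
  rcases abs_cases t with ⟨h, _⟩ | ⟨h, _⟩ <;> rw [h]
  · rw [div_mul_eq_mul_div, mul_comm t r, mul_div_mul_right _ _ ht]
  · rw [neg_mul, Real.sin_neg, neg_div_neg_eq, div_mul_eq_mul_div, mul_comm t r,
      mul_div_mul_right _ _ ht]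

theorem Quaternion.exp_real_smul (t : ℝ) (q : ℍ[ℝ]) :
    exp (t • q) = Real.exp (t * q.re) •
      (↑(Real.cos (t * ‖q.im‖)) + (Real.sin (t * ‖q.im‖) / ‖q.im‖) • q.im) := by
  rw [Quaternion.exp_eq, Real.exp_eq_exp_ℝ, Quaternion.re_smul, Quaternion.im_smul, norm_smul,
    Real.norm_eq_abs, smul_smul, Real.cos_abs_mul, Real.sin_abs_mul_div_abs_mul_mul, smul_eq_mul]

theorem qpow_eq_exp_log_smul {z : ℝ} (hz : 0 < z) (q : ℍ[ℝ]) :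
    qpow z q = exp (Real.log z • q) := by
  rw [Quaternion.exp_real_smul, qpow, Real.rpow_def_of_pos hz, mul_comm ‖q.im‖]

theorem qpow_sub_one {z : ℝ} (hz : z ≠ 0) (q : ℍ[ℝ]) : qpow z (q - 1) = z⁻¹ • qpow z q := by
  simp [qpow, Real.rpow_sub_one hz, smul_smul, div_eq_inv_mul, mul_assoc]

theorem qpow_hasDerivAt_general (q : ℍ[ℝ]) (z : ℝ) (hz : 0 < z) :
    HasDerivAt (fun z => qpow z q) (q * qpow z (q - 1)) z := by
  have hexp := (hasDerivAt_exp_smul_const' (𝔸 := ℍ[ℝ]) q (Real.log z)).scomp z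
    (Real.hasDerivAt_log hz.ne')
  rw [qpow_sub_one hz.ne', mul_smul_comm, qpow_eq_exp_log_smul hz]
  refine hexp.congr_of_eventuallyEq ?_
  filter_upwards [lt_mem_nhds hz] with w hw using qpow_eq_exp_log_smul hw q

/-- The derivative of `z ↦ z^q` with respect to `z > 0` is `q z^{q-1}`. -/
theorem qpow_hasDerivAt (q : ℍ[ℝ]) (hv : q.im ≠ 0) (z : ℝ) (hz : 0 < z) :
    HasDerivAt (fun z => qpow z q) (q * qpow z (q - 1)) z :=
  qpow_hasDerivAt_general q z hz
end

section
/- If q₁ = a₁ + v₁ and q₂ = a₂ + v₂ are real quaternions with v₁, v₂ nonzero and not parallel (v₁ ∧ v₂ ≠ 0), then there exists z > 0 (in any neighborhood of 1) such that z^{q₁} z^{q₂} ≠ z^{q₁+q₂}. -/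
/-!
Write `z^q = α + s • v` with `v = Ve q` and `s = z^{Sc q} sin(|v| log z) / |v|`. The vector
part of `v₁ * v₂` is the cross product `v₁ × v₂`, orthogonal to `1`, `v₁` and `v₂`, so the
component of `z^{q₁} z^{q₂}` along it is `s₁ s₂ |v₁ × v₂|²`, while `z^{q₁+q₂}` lies in
`span {1, v₁ + v₂}`. For `z > 1` close to `1` both sines are nonzero.
-/

open scoped Quaternion

open Quaternion Real Filter Topology

section CrossProduct

variable (u v : ℍ[ℝ])

theorem inner_coe_add_smul_mul_coe_add_smul_im_mul_im (α β s r : ℝ) :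
    inner ℝ (((α : ℍ[ℝ]) + s • u.im) * ((β : ℍ[ℝ]) + r • v.im)) (u.im * v.im).im =
      s * r * inner ℝ (u.im * v.im).im (u.im * v.im).im := by
  simp only [inner_def, re_mul, imI_mul, imJ_mul, imK_mul, re_add, imI_add, imJ_add, imK_add,
    re_smul, imI_smul, imJ_smul, imK_smul, re_coe, imI_coe, imJ_coe, imK_coe, re_im, imI_im,
    imJ_im, imK_im, re_star, imI_star, imJ_star, imK_star, smul_eq_mul]
  ring

theorem inner_coe_add_smul_im_add_im_im_mul_im (α s : ℝ) :
    inner ℝ ((α : ℍ[ℝ]) + s • (u.im + v.im)) (u.im * v.im).im = 0 := by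
  simp only [inner_def, re_mul, imI_mul, imJ_mul, imK_mul, re_add, imI_add, imJ_add, imK_add,
    re_smul, imI_smul, imJ_smul, imK_smul, re_coe, imI_coe, imJ_coe, imK_coe, re_im, imI_im,
    imJ_im, imK_im, re_star, imI_star, imJ_star, imK_star, smul_eq_mul]
  ring

end CrossProduct

theorem qpow_eq_coe_add_smul_im (z : ℝ) (q : ℍ[ℝ]) :
    qpow z q = ((z ^ q.re * cos (‖q.im‖ * log z) : ℝ) : ℍ[ℝ]) +
      (z ^ q.re * (sin (‖q.im‖ * log z) / ‖q.im‖)) • q.im := by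
  rw [qpow, smul_add, smul_smul, ← coe_smul, smul_eq_mul]

theorem qpow_mul_qpow_ne_qpow_add {z : ℝ} (hz : 0 < z) {q₁ q₂ : ℍ[ℝ]}
    (h₁ : sin (‖q₁.im‖ * log z) ≠ 0) (h₂ : sin (‖q₂.im‖ * log z) ≠ 0)
    (hcross : (q₁.im * q₂.im).im ≠ 0) :
    qpow z q₁ * qpow z q₂ ≠ qpow z (q₁ + q₂) := by
  have coeff_ne_zero : ∀ q : ℍ[ℝ], sin (‖q.im‖ * log z) ≠ 0 →
      z ^ q.re * (sin (‖q.im‖ * log z) / ‖q.im‖) ≠ 0 := fun q h ↦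
    mul_ne_zero (rpow_pos_of_pos hz _).ne' <|
      div_ne_zero h fun h0 ↦ h (by rw [h0, zero_mul, sin_zero])
  intro h
  have h_inner := congrArg (fun x ↦ inner ℝ x (q₁.im * q₂.im).im) h
  simp only [qpow_eq_coe_add_smul_im, im_add, inner_coe_add_smul_mul_coe_add_smul_im_mul_im,
    inner_coe_add_smul_im_add_im_im_mul_im] at h_inner
  exact mul_ne_zero (mul_ne_zero (coeff_ne_zero q₁ h₁) (coeff_ne_zero q₂ h₂))
    (inner_self_ne_zero.mpr hcross) h_inner

theorem eventually_sin_mul_log_ne_zero {c : ℝ} (hc : 0 < c) :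
    ∀ᶠ z in 𝓝[>] 1, sin (c * log z) ≠ 0 := by
  have h_tendsto : Tendsto (fun z ↦ c * log z) (𝓝 1) (𝓝 0) := by
    simpa using ((continuousAt_log one_ne_zero).const_mul c).tendsto
  filter_upwards [self_mem_nhdsWithin,
    nhdsWithin_le_nhds (h_tendsto.eventually (gt_mem_nhds pi_pos))] with z (hz : 1 < z) hlt
  exact (sin_pos_of_pos_of_lt_pi (mul_pos hc (log_pos hz)) hlt).ne'

/-- If the vector parts of `q₁` and `q₂` are nonzero and not parallel (nonvanishing cross
product, i.e. the vector part of `q₁.im * q₂.im` is nonzero), then in any neighborhood of `1`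
there is a `z > 0` with `z^{q₁} z^{q₂} ≠ z^{q₁+q₂}`. -/
theorem qpow_semigroup_fails (q₁ q₂ : ℍ[ℝ]) (hv₁ : q₁.im ≠ 0) (hv₂ : q₂.im ≠ 0)
    (hcross : (q₁.im * q₂.im).im ≠ 0) :
    ∀ ε : ℝ, 0 < ε → ∃ z : ℝ, 0 < z ∧ |z - 1| < ε ∧
      qpow z q₁ * qpow z q₂ ≠ qpow z (q₁ + q₂) := by
  intro ε hε
  have h_gt : ∀ᶠ z in 𝓝[>] (1 : ℝ), 1 < z := self_mem_nhdsWithin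
  have h_close : ∀ᶠ z in 𝓝[>] (1 : ℝ), |z - 1| < ε :=
    nhdsWithin_le_nhds <| mem_of_superset (Metric.ball_mem_nhds (1 : ℝ) hε) fun z hz ↦ by
      rwa [Metric.mem_ball, Real.dist_eq] at hz
  have h_ne : ∀ᶠ z in 𝓝[>] 1, qpow z q₁ * qpow z q₂ ≠ qpow z (q₁ + q₂) := by
    filter_upwards [h_gt, eventually_sin_mul_log_ne_zero (norm_pos_iff.2 hv₁),
      eventually_sin_mul_log_ne_zero (norm_pos_iff.2 hv₂)] with z hz h₁ h₂
    exact qpow_mul_qpow_ne_qpow_add (zero_lt_one.trans hz) h₁ h₂ hcross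
  obtain ⟨z, hz, hzε, hz_ne⟩ := (h_gt.and (h_close.and h_ne)).exists
  exact ⟨z, zero_lt_one.trans hz, hzε, hz_ne⟩
end

section
/- (Quaternionic binomial theorem) Let q = a + v be a real quaternion with a > 0 and v ≠ 0, and let z ∈ ℂ with |z| < 1, identified with an element of the commutative subalgebra of ℍ_ℂ generated by 1 and i. Then (1+z)^q = ∑_{j=0}^∞ C(q,j) z^j, where C(q,j) := q(q-1)⋯(q-j+1)/j! is the quaternionic binomial coefficient and (1+z)^q := (1+z)^a (cos(|v| log(1+z)) + (v/|v|) sin(|v| log(1+z))) using the principal branch of the logarithm. -/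
/-!
Put `u = (i/|v|) v ∈ ℍ_ℂ`. Since `u² = 1`, the map `(c, d) ↦ (c + d)/2 + ((c - d)/2) u` is an
algebra map `ℂ × ℂ → ℍ_ℂ`, and it sends `(a - i|v|, a + i|v|)` to `q`. Hence it sends the pair of
complex binomial coefficients of `a ∓ i|v|` to `C(q, j)`, and the quaternionic series is the image
of two complex binomial series. These converge to `(1+z)^(a ∓ i|v|) = (1+z)^a (cos θ ∓ i sin θ)`
with `θ = |v| log(1+z)`, and recombining them gives the cosine/sine formula.
-/

open scoped Quaternion

/-- Embedding of the real quaternions into the complexified quaternions. -/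
noncomputable def qc (q : ℍ[ℝ]) : Quaternion ℂ :=
  ⟨(q.re : ℂ), (q.imI : ℂ), (q.imJ : ℂ), (q.imK : ℂ)⟩


noncomputable instance : TopologicalSpace (Quaternion ℂ) :=
  TopologicalSpace.induced (QuaternionAlgebra.equivTuple (-1 : ℂ) 0 (-1)) inferInstance

/-- The quaternionic binomial coefficient `C(q,j) = q(q-1)⋯(q-j+1)/j!`. -/
noncomputable def qbinom (q : ℍ[ℝ]) (j : ℕ) : ℍ[ℝ] :=
  ((j.factorial : ℝ))⁻¹ • ((List.range j).map (fun k => q - (k : ℍ[ℝ]))).prod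

open Polynomial in
theorem descPochhammer_smeval_eq_list_prod {R : Type*} [Ring R] (r : R) (n : ℕ) :
    (descPochhammer ℤ n).smeval r = ((List.range n).map fun k : ℕ => r - k).prod := by
  induction n with
  | zero => simp [smeval_one]
  | succ n ih =>
    rw [descPochhammer_succ_right, smeval_mul, ih, smeval_sub, smeval_X, smeval_natCast,
      List.range_succ, List.map_append, List.prod_append]
    simp

theorem Ring.choose_eq_inv_factorial_mul_list_prod {K : Type*} [Field K] [CharZero K]
    (r : K) (n : ℕ) :
    Ring.choose r n = (n.factorial : K)⁻¹ * ((List.range n).map fun k : ℕ => r - k).prod := by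
  rw [Ring.choose_eq_smul, descPochhammer_smeval_eq_list_prod, smul_eq_mul]

theorem Complex.hasSum_choose_mul_pow (a : ℂ) {z : ℂ} (hz : ‖z‖ < 1) :
    HasSum (fun n => Ring.choose a n * z ^ n) ((1 + z) ^ a) := by
  have := Complex.one_add_cpow_hasFPowerSeriesOnBall_zero (a := a) |>.hasSum
    (y := z) (by simpa [← ofReal_norm] using hz)
  simpa [binomialSeries, FormalMultilinearSeries.coeff_ofScalars, mul_comm] using this

section Involution

variable {K A : Type*} [Field K] [NeZero (2 : K)] [Ring A] [Algebra K A] {x : A}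

def prodAlgHomOfMulSelfEqOne (hx : x * x = 1) : K × K →ₐ[K] A where
  toFun p := ((p.1 + p.2) / 2) • 1 + ((p.1 - p.2) / 2) • x
  map_one' := by simp
  map_mul' p p' := by
    simp only [Prod.fst_mul, Prod.snd_mul, add_mul, mul_add, smul_mul_smul_comm, one_mul,
      mul_one, hx]
    match_scalars <;> field
  map_zero' := by simp
  map_add' p p' := by
    simp only [Prod.fst_add, Prod.snd_add]
    module
  commutes' c := by
    simp [Algebra.algebraMap_eq_smul_one]

theorem prodAlgHomOfMulSelfEqOne_apply (hx : x * x = 1) (p : K × K) :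
    prodAlgHomOfMulSelfEqOne hx p = ((p.1 + p.2) / 2) • 1 + ((p.1 - p.2) / 2) • x :=
  rfl

end Involution

theorem Complex.cpow_add_mul_I {w : ℂ} (hw : w ≠ 0) (a t : ℂ) :
    w ^ (a + t * I) = w ^ a * (cos (t * log w) + sin (t * log w) * I) := by
  rw [cpow_def_of_ne_zero hw, cpow_def_of_ne_zero hw, ← exp_mul_I, ← exp_add]
  ring_nf

theorem continuous_linearMap_quaternion {E : Type*} [NormedAddCommGroup E] [NormedSpace ℂ E]
    [FiniteDimensional ℂ E] (f : E →ₗ[ℂ] ℍ[ℂ]) : Continuous f :=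
  continuous_induced_rng.2 <| LinearMap.continuous_of_finiteDimensional <|
    (QuaternionAlgebra.linearEquivTuple (-1 : ℂ) 0 (-1)).toLinearMap ∘ₗ f

@[simp] theorem qc_re (x : ℍ[ℝ]) : (qc x).re = x.re := rfl
@[simp] theorem qc_imI (x : ℍ[ℝ]) : (qc x).imI = x.imI := rfl
@[simp] theorem qc_imJ (x : ℍ[ℝ]) : (qc x).imJ = x.imJ := rfl
@[simp] theorem qc_imK (x : ℍ[ℝ]) : (qc x).imK = x.imK := rfl

noncomputable def qcAlgHom : ℍ[ℝ] →ₐ[ℝ] ℍ[ℂ] where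
  toFun := qc
  map_one' := by ext <;> simp
  map_mul' x y := by ext <;> simp
  map_zero' := by ext <;> simp
  map_add' x y := by ext <;> simp
  commutes' r := by ext <;> simp [Algebra.algebraMap_eq_smul_one]

theorem qcAlgHom_apply (x : ℍ[ℝ]) : qcAlgHom x = qc x := rfl

theorem qc_qbinom_eq_of_qc_eq {q : ℍ[ℝ]} {φ : ℂ × ℂ →ₐ[ℂ] ℍ[ℂ]} {l : ℂ × ℂ} (hq : qc q = φ l)
    (j : ℕ) : qc (qbinom q j) = φ (Ring.choose l.1 j, Ring.choose l.2 j) := by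
  have hprod : qc (qbinom q j) =
      φ ((j.factorial : ℂ)⁻¹ • ((List.range j).map fun k : ℕ => l - k).prod) := by
    change qcAlgHom _ = _
    simp only [qbinom, bind_pure_comp, List.map_eq_map, List.map_map, map_smul, map_list_prod]
    have real_smul (r : ℝ) (x : ℍ[ℂ]) : r • x = (r : ℂ) • x := by
      ext <;> simp [Complex.real_smul]
    rw [real_smul]
    push_cast
    congr 3
    funext k
    simp only [Function.comp_apply, map_sub, map_natCast, qcAlgHom_apply, hq]
  rw [hprod]
  congr 1
  ext
  · rw [Prod.smul_fst, ← RingHom.coe_fst, map_list_prod]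
    simp [Ring.choose_eq_inv_factorial_mul_list_prod, Function.comp_def]
  · rw [Prod.smul_snd, ← RingHom.coe_snd, map_list_prod]
    simp [Ring.choose_eq_inv_factorial_mul_list_prod, Function.comp_def]

theorem hasSum_smul_qc_qbinom_of_qc_eq {q : ℍ[ℝ]} {φ : ℂ × ℂ →ₐ[ℂ] ℍ[ℂ]} {l : ℂ × ℂ}
    (hq : qc q = φ l) {z : ℂ} (hz : ‖z‖ < 1) :
    HasSum (fun j => z ^ j • qc (qbinom q j)) (φ ((1 + z) ^ l.1, (1 + z) ^ l.2)) := by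
  have h := ((Complex.hasSum_choose_mul_pow l.1 hz).prodMk
    (Complex.hasSum_choose_mul_pow l.2 hz)).map φ
    (continuous_linearMap_quaternion φ.toLinearMap)
  convert h using 2 with j
  rw [qc_qbinom_eq_of_qc_eq hq, ← map_smul]
  congr 1
  ext <;> simp [mul_comm]

open Complex in
theorem mul_self_smul_qc_im {q : ℍ[ℝ]} (hv : q.im ≠ 0) :
    ((I / ‖q.im‖) • qc q.im) * ((I / ‖q.im‖) • qc q.im) = 1 := by
  have hν : (‖q.im‖ : ℂ) ≠ 0 := by simpa using hv
  have h : (‖q.im‖ : ℂ) ^ 2 = q.imI ^ 2 + q.imJ ^ 2 + q.imK ^ 2 := by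
    rw [sq, ← Complex.ofReal_mul, ← Quaternion.normSq_eq_norm_mul_self, Quaternion.normSq_def']
    simp
  -- The ℂ-action of `ℍ[ℂ]` is not reducibly the algebra action, so `smul_mul_smul_comm` does not
  -- apply; compute componentwise instead.
  ext <;> simp
  · field_simp
    rw [I_sq, h]
    ring
  all_goals ring

open Complex in
theorem qc_eq_prodAlgHomOfMulSelfEqOne {q : ℍ[ℝ]} (hv : q.im ≠ 0) :
    qc q = prodAlgHomOfMulSelfEqOne (mul_self_smul_qc_im hv)
      ((q.re : ℂ) - ‖q.im‖ * I, (q.re : ℂ) + ‖q.im‖ * I) := by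
  have hν : (‖q.im‖ : ℂ) ≠ 0 := by simpa using hv
  have hI : ((q.re : ℂ) - ‖q.im‖ * I - (q.re + ‖q.im‖ * I)) / 2 * (I / ‖q.im‖) = 1 := by
    field_simp
    linear_combination (-2 * (‖q.im‖ : ℂ)) * I_sq
  rw [prodAlgHomOfMulSelfEqOne_apply]
  ext <;> simp [← mul_assoc, hI]

theorem quaternionic_binomial_theorem_general (q : ℍ[ℝ]) (hv : q.im ≠ 0)
    (z : ℂ) (hz : ‖z‖ < 1) :
    HasSum (fun j : ℕ => z ^ j • qc (qbinom q j))
      (((1 + z) ^ (q.re : ℂ)) •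
        (((Complex.cos ((‖q.im‖ : ℂ) * Complex.log (1 + z))) : Quaternion ℂ) +
          (Complex.sin ((‖q.im‖ : ℂ) * Complex.log (1 + z)) / (‖q.im‖ : ℂ)) • qc q.im)) := by
  have hν : (‖q.im‖ : ℂ) ≠ 0 := by simpa using hv
  have hz1 : 1 + z ≠ 0 := Complex.slitPlane_ne_zero (Complex.mem_slitPlane_of_norm_lt_one hz)
  convert hasSum_smul_qc_qbinom_of_qc_eq (qc_eq_prodAlgHomOfMulSelfEqOne hv) hz using 1
  rw [prodAlgHomOfMulSelfEqOne_apply, sub_eq_add_neg, ← neg_mul, Complex.cpow_add_mul_I hz1,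
    Complex.cpow_add_mul_I hz1, neg_mul, Complex.cos_neg, Complex.sin_neg]
  ext <;> simp
  · ring
  all_goals
    field_simp
    ring_nf
    rw [Complex.I_sq]
    ring

/-- Quaternionic binomial theorem: for `q = a + v` with `a > 0`, `v ≠ 0` and `z ∈ ℂ`
with `|z| < 1`, `(1+z)^q = ∑_{j=0}^∞ C(q,j) z^j`, where
`(1+z)^q = (1+z)^a (cos(|v| log(1+z)) + (v/|v|) sin(|v| log(1+z)))` in the complexified
quaternions (principal branch of the logarithm). -/
theorem quaternionic_binomial_theorem (q : ℍ[ℝ]) (ha : 0 < q.re) (hv : q.im ≠ 0)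
    (z : ℂ) (hz : ‖z‖ < 1) :
    HasSum (fun j : ℕ => z ^ j • qc (qbinom q j))
      (((1 + z) ^ (q.re : ℂ)) •
        (((Complex.cos ((‖q.im‖ : ℂ) * Complex.log (1 + z))) : Quaternion ℂ) +
          (Complex.sin ((‖q.im‖ : ℂ) * Complex.log (1 + z)) / (‖q.im‖ : ℂ)) • qc q.im)) :=
  quaternionic_binomial_theorem_general q hv z hz
end
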